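/- arXiv:1009.2312 — 4 statements merged into one kernel-verified Lean document; each statement's English description precedes it below -/
import Mathlib

section
/- Let ‖·‖ be a strongly convex Minkowski norm on ℝⁿ with approximating inner products g_x for x ≠ 0 given by the Hessian of ‖·‖²/2. Then the 2-uniform convexity constant C equals sup over nonzero x, y of ‖y‖ / g_x(y,y)^{1/2}, and the 2-uniform smoothness constant S equals sup over nonzero x, y of g_x(y,y)^{1/2} / ‖y‖. -/
/-!
Write `F = N² / 2`. Substituting `x = m + u`, `y = m - u`, the inequalities defining `C` and `S`
become two-sided bounds on the second differences of `F`: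
`N(u)² / c² ≤ F(m + u) + F(m - u) - 2 F(m) ≤ s² N(u)²`.
Taking `u = t y` with `t → 0⁺` turns them into the pointwise bounds
`N(y)² / c² ≤ gₓ(y, y) ≤ s² N(y)²`. Conversely, pointwise Hessian bounds give back the
second-difference bounds, because `t ↦ ±F(m + t u) ∓ κ t² / 2` is convex on every line: by the
second-derivative test when the line misses the origin, and by the explicit piecewise-quadratic
form of `F` on lines through the origin. Hence the admissible constants are exactly the upper
bounds of the ratio sets, and the least one is the supremum.
-/

open Filter Topology Set

def secondDiff {G : Type*} [AddGroup G] (f : G → ℝ) (x y : G) : ℝ :=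
  f (x + y) + f (x - y) - 2 * f x

theorem secondDiff_neg {G : Type*} [AddGroup G] (f : G → ℝ) (x y : G) :
    secondDiff (fun z => -f z) x y = -secondDiff f x y := by
  simp only [secondDiff]
  ring

theorem div_sqrt_le_iff {a b c : ℝ} (ha : 0 ≤ a) (hb : 0 < b) (hc : 0 < c) :
    a / √b ≤ c ↔ a ^ 2 / c ^ 2 ≤ b := by
  have hprod : c * √b = √(c ^ 2 * b) := by rw [Real.sqrt_mul (sq_nonneg c), Real.sqrt_sq hc.le]
  rw [div_le_iff₀ (Real.sqrt_pos.2 hb), hprod, Real.le_sqrt ha (by positivity),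
    div_le_iff₀ (by positivity), mul_comm b]

theorem sqrt_div_le_iff {a b c : ℝ} (hb : 0 < b) (hc : 0 < c) :
    √a / b ≤ c ↔ a ≤ c ^ 2 * b ^ 2 := by
  rw [div_le_iff₀ hb, Real.sqrt_le_left (by positivity), mul_pow]

theorem csSup_eq_of_isLeast_pos {T : Set ℝ} {P : ℝ → Prop} {C : ℝ}
    (hP : ∀ c, 0 < c → (P c ↔ c ∈ upperBounds T)) (hC : IsLeast {c | 0 < c ∧ P c} C) :
    C = sSup T := by
  have hCpos : 0 < C := hC.1.1
  obtain ⟨a, haT, ha⟩ : ∃ a ∈ T, 0 < a := by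
    by_contra! hT
    have hhalf : C / 2 ∈ {c | 0 < c ∧ P c} :=
      ⟨half_pos hCpos, (hP _ (half_pos hCpos)).2 fun a haT => (hT a haT).trans (half_pos hCpos).le⟩
    linarith [hC.2 hhalf]
  have hset : {c | 0 < c ∧ P c} = upperBounds T := by
    ext c
    exact ⟨fun hc => (hP c hc.1).1 hc.2,
      fun hc => ⟨ha.trans_le (hc haT), (hP c (ha.trans_le (hc haT))).2 hc⟩⟩
  rw [hset] at hC
  exact (IsLUB.csSup_eq hC ⟨a, haT⟩).symm

theorem ConvexOn.le_avg_add_sub {φ : ℝ → ℝ} (h : ConvexOn ℝ univ φ) (x d : ℝ) :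
    φ x ≤ (φ (x + d) + φ (x - d)) / 2 := by
  have hmid := h.2 (mem_univ (x + d)) (mem_univ (x - d)) (by norm_num : (0 : ℝ) ≤ 1 / 2)
    (by norm_num : (0 : ℝ) ≤ 1 / 2) (by norm_num)
  have hx : (1 / 2 : ℝ) • (x + d) + (1 / 2 : ℝ) • (x - d) = x := by simp only [smul_eq_mul]; ring
  rw [hx, smul_eq_mul, smul_eq_mul] at hmid
  linarith

theorem convexOn_max_zero_sq : ConvexOn ℝ univ (fun c : ℝ => max c 0 ^ 2) :=
  ((convexOn_id convex_univ).sup (convexOn_const 0 convex_univ)).pow (fun _ _ => le_sup_right) 2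

theorem convexOn_max_neg_zero_sq : ConvexOn ℝ univ (fun c : ℝ => max (-c) 0 ^ 2) :=
  (((-LinearMap.id : ℝ →ₗ[ℝ] ℝ).convexOn convex_univ).sup
    (convexOn_const 0 convex_univ)).pow (fun _ _ => le_sup_right) 2

theorem forall_add_sub_iff {E : Type*} [AddCommGroup E] [Module ℝ E] {P : E → E → Prop} :
    (∀ x y, P x y) ↔ ∀ m u, P (m + u) (m - u) := by
  refine ⟨fun h m u => h _ _, fun h x y => ?_⟩
  convert h ((2⁻¹ : ℝ) • (x + y)) ((2⁻¹ : ℝ) • (x - y)) using 1 <;> module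

section

variable {E : Type*} [NormedAddCommGroup E] [NormedSpace ℝ E]

theorem HasFDerivAt.hasDerivAt_comp_line {F : Type*} [NormedAddCommGroup F] [NormedSpace ℝ F]
    {φ : E → F} {φ' : E →L[ℝ] F} {x v : E} {t : ℝ} (h : HasFDerivAt φ φ' (x + t • v)) :
    HasDerivAt (fun s : ℝ => φ (x + s • v)) (φ' v) t := by
  have hline : HasDerivAt (fun s : ℝ => x + s • v) v t := by
    simpa using ((hasDerivAt_id t).smul_const v).const_add x
  exact h.comp_hasDerivAt t hline

theorem HasFDerivAt.hasDerivAt_comp_smul {F : Type*} [NormedAddCommGroup F] [NormedSpace ℝ F]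
    {φ : E → F} {φ' : E →L[ℝ] F} {x : E} (h : HasFDerivAt φ φ' x) :
    HasDerivAt (fun s : ℝ => φ (s • x)) (φ' x) 1 := by
  simpa using HasFDerivAt.hasDerivAt_comp_line (φ := φ) (x := 0) (v := x) (t := 1)
    (by simpa using h)

theorem tendsto_secondDiff_div_sq {f : E → ℝ} {f' : E → E →L[ℝ] ℝ} {f'' : E →L[ℝ] E →L[ℝ] ℝ}
    {x : E} (hf : ∀ᶠ z in 𝓝 x, HasFDerivAt f (f' z) z) (hf' : HasFDerivAt f' f'' x) (y : E) :
    Tendsto (fun t : ℝ => secondDiff f x (t • y) / t ^ 2) (𝓝[>] 0) (𝓝 (f'' y y)) := by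
  have hnear (v : E) : ∀ᶠ t in 𝓝 (0 : ℝ), HasFDerivAt f (f' (x + t • v)) (x + t • v) := by
    refine (Continuous.tendsto' ?_ 0 x (by simp)).eventually hf
    fun_prop
  have hsplit : (fun t : ℝ => secondDiff f x (t • y)) =
      fun t => f (x + t • y) + f (x + t • -y) - 2 * f x := by
    simp only [secondDiff, smul_neg, ← sub_eq_add_neg]
  set D : ℝ → ℝ := fun t => f' (x + t • y) y + f' (x + t • -y) (-y)
  have hnum : ∀ᶠ t in 𝓝 (0 : ℝ), HasDerivAt (fun t => secondDiff f x (t • y)) (D t) t := by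
    filter_upwards [hnear y, hnear (-y)] with t hp hm
    rw [hsplit]
    exact (hp.hasDerivAt_comp_line.add hm.hasDerivAt_comp_line).sub_const (2 * f x)
  have hD : HasDerivAt D (2 * f'' y y) 0 := by
    have hline (v : E) : HasDerivAt (fun t : ℝ => f' (x + t • v) v) (f'' v v) 0 := by
      have h0 : HasFDerivAt f' f'' (x + (0 : ℝ) • v) := by rwa [zero_smul, add_zero]
      simpa using h0.hasDerivAt_comp_line.clm_apply (hasDerivAt_const (0 : ℝ) v)
    refine ((hline y).add (hline (-y))).congr_deriv ?_
    simp [two_mul]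
  have hD0 : D 0 = 0 := by simp [D]
  -- L'Hôpital: `D t / (2 t)` is half the difference quotient of `D` at `0`, where `D 0 = 0`.
  refine HasDerivAt.lhopital_zero_nhdsGT (nhdsWithin_le_nhds hnum)
    (Eventually.of_forall fun t => hasDerivAt_pow 2 t) ?_ ?_ ?_ ?_
  · filter_upwards [self_mem_nhdsWithin] with t (ht : 0 < t)
    positivity
  · have hcont := hnum.self_of_nhds.continuousAt.tendsto.mono_left (nhdsWithin_le_nhds (s := Ioi 0))
    simpa [secondDiff, ← two_mul] using hcont
  · exact tendsto_nhdsWithin_of_tendsto_nhds (by simpa using (continuous_pow 2).tendsto (0 : ℝ))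
  · have hslope : Tendsto (fun t => D t / (2 * t)) (𝓝[>] 0) (𝓝 (2 * f'' y y / 2)) := by
      refine (hD.tendsto_slope_zero_right.div_const 2).congr' (Eventually.of_forall fun t => ?_)
      simp only [zero_add, hD0, sub_zero, smul_eq_mul]
      field_simp
    simpa using hslope

section Homogeneous

variable {f : E → ℝ} {f' : E → E →L[ℝ] ℝ} {f'' : E → E →L[ℝ] E →L[ℝ] ℝ}

theorem map_zero_of_sq_homogeneous (hhom : ∀ c : ℝ, 0 < c → ∀ x, f (c • x) = c ^ 2 * f x) :
    f 0 = 0 := by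
  have h := hhom 2 two_pos 0
  rw [smul_zero] at h
  linarith

theorem apply_smul_of_sq_homogeneous (hhom : ∀ c : ℝ, 0 < c → ∀ x, f (c • x) = c ^ 2 * f x)
    (c : ℝ) (u : E) : f (c • u) = f u * max c 0 ^ 2 + f (-u) * max (-c) 0 ^ 2 := by
  rcases lt_trichotomy c 0 with hc | rfl | hc
  · rw [max_eq_right hc.le, max_eq_left (neg_nonneg.2 hc.le), ← neg_smul_neg,
      hhom (-c) (neg_pos.2 hc)]
    ring
  · simp [map_zero_of_sq_homogeneous hhom]
  · rw [max_eq_left hc.le, max_eq_right (neg_nonpos.2 hc.le), hhom c hc]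
    ring

theorem fderiv_smul_of_sq_homogeneous (hhom : ∀ c : ℝ, 0 < c → ∀ x, f (c • x) = c ^ 2 * f x)
    (hf : ∀ x, x ≠ 0 → HasFDerivAt f (f' x) x) {x : E} (hx : x ≠ 0) {c : ℝ} (hc : 0 < c) :
    f' (c • x) = c • f' x := by
  have hscaled : HasFDerivAt (fun y => f (c • y)) (c • f' (c • x)) x := by
    refine ((hf _ (smul_ne_zero hc.ne' hx)).comp x
      ((hasFDerivAt_id x).const_smul c)).congr_fderiv ?_
    ext v
    simp
  have hmul : HasFDerivAt (fun y => f (c • y)) (c • (c • f' x)) x := by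
    simp_rw [hhom c hc, ← smul_eq_mul, smul_smul, ← sq]
    exact (hf x hx).const_smul (c ^ 2)
  exact smul_right_injective _ hc.ne' (hscaled.unique hmul)

theorem fderiv_apply_self_of_sq_homogeneous
    (hhom : ∀ c : ℝ, 0 < c → ∀ x, f (c • x) = c ^ 2 * f x)
    (hf : ∀ x, x ≠ 0 → HasFDerivAt f (f' x) x) {x : E} (hx : x ≠ 0) :
    f' x x = 2 * f x := by
  have hray : (fun s : ℝ => f (s • x)) =ᶠ[𝓝 1] fun s => s ^ 2 * f x := by
    filter_upwards [Ioi_mem_nhds one_pos] with s hs using hhom s hs x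
  have hquad : HasDerivAt (fun s : ℝ => s ^ 2 * f x) (2 * f x) 1 := by
    simpa using (hasDerivAt_pow 2 (1 : ℝ)).mul_const (f x)
  exact ((hf x hx).hasDerivAt_comp_smul.congr_of_eventuallyEq hray.symm).unique hquad

theorem hessian_apply_self_of_sq_homogeneous
    (hhom : ∀ c : ℝ, 0 < c → ∀ x, f (c • x) = c ^ 2 * f x)
    (hf : ∀ x, x ≠ 0 → HasFDerivAt f (f' x) x) (hf' : ∀ x, x ≠ 0 → HasFDerivAt f' (f'' x) x)
    {x : E} (hx : x ≠ 0) : f'' x x = f' x := by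
  have hray : (fun s : ℝ => f' (s • x)) =ᶠ[𝓝 1] fun s => s • f' x := by
    filter_upwards [Ioi_mem_nhds one_pos] with s hs
      using fderiv_smul_of_sq_homogeneous hhom hf hx hs
  have hlin : HasDerivAt (fun s : ℝ => s • f' x) (f' x) 1 := by
    simpa using (hasDerivAt_id (1 : ℝ)).smul_const (f' x)
  exact ((hf' x hx).hasDerivAt_comp_smul.congr_of_eventuallyEq hray.symm).unique hlin

theorem hessian_apply_self_self_of_sq_homogeneous
    (hhom : ∀ c : ℝ, 0 < c → ∀ x, f (c • x) = c ^ 2 * f x)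
    (hf : ∀ x, x ≠ 0 → HasFDerivAt f (f' x) x) (hf' : ∀ x, x ≠ 0 → HasFDerivAt f' (f'' x) x)
    {x : E} (hx : x ≠ 0) : f'' x x x = 2 * f x := by
  rw [hessian_apply_self_of_sq_homogeneous hhom hf hf' hx,
    fderiv_apply_self_of_sq_homogeneous hhom hf hx]

theorem convexOn_comp_smul_sub_sq (hhom : ∀ c : ℝ, 0 < c → ∀ x, f (c • x) = c ^ 2 * f x)
    {u : E} {κ : ℝ} (hu : κ ≤ 2 * f u) (hnegu : κ ≤ 2 * f (-u)) :
    ConvexOn ℝ univ (fun c : ℝ => f (c • u) - κ / 2 * c ^ 2) := by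
  have hsplit : (fun c : ℝ => f (c • u) - κ / 2 * c ^ 2) = fun c =>
      (f u - κ / 2) * max c 0 ^ 2 + (f (-u) - κ / 2) * max (-c) 0 ^ 2 := by
    funext c
    have hsq : max c 0 ^ 2 + max (-c) 0 ^ 2 = c ^ 2 := by
      rcases le_total c 0 with hc | hc
      · rw [max_eq_right hc, max_eq_left (neg_nonneg.2 hc)]
        ring
      · rw [max_eq_left hc, max_eq_right (neg_nonpos.2 hc)]
        ring
    rw [apply_smul_of_sq_homogeneous hhom, ← hsq]
    ring
  rw [hsplit]
  exact (convexOn_max_zero_sq.smul (by linarith)).add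
    (convexOn_max_neg_zero_sq.smul (by linarith))

theorem convexOn_comp_line_sub_sq (hf : ∀ x, x ≠ 0 → HasFDerivAt f (f' x) x)
    (hf' : ∀ x, x ≠ 0 → HasFDerivAt f' (f'' x) x) {m u : E} (hline : ∀ t : ℝ, m + t • u ≠ 0)
    {κ : ℝ} (hκ : ∀ z, z ≠ 0 → κ ≤ f'' z u u) :
    ConvexOn ℝ univ (fun t : ℝ => f (m + t • u) - κ / 2 * t ^ 2) := by
  have hφ (t : ℝ) : HasDerivAt (fun t : ℝ => f (m + t • u) - κ / 2 * t ^ 2)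
      (f' (m + t • u) u - κ * t) t := by
    refine ((hf _ (hline t)).hasDerivAt_comp_line.sub
      ((hasDerivAt_pow 2 t).const_mul (κ / 2))).congr_deriv ?_
    simp only [Nat.cast_ofNat]
    ring
  have hφ' (t : ℝ) : HasDerivAt (fun t : ℝ => f' (m + t • u) u - κ * t)
      (f'' (m + t • u) u u - κ) t := by
    have happ := (hf' _ (hline t)).hasDerivAt_comp_line.clm_apply (hasDerivAt_const t u)
    have hsub := happ.sub ((hasDerivAt_id t).const_mul κ)
    simp only [map_zero, add_zero, mul_one] at hsub
    exact hsub
  exact convexOn_of_hasDerivWithinAt2_nonneg convex_univ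
    (fun t _ => (hφ t).continuousAt.continuousWithinAt) (fun t _ => (hφ t).hasDerivWithinAt)
    (fun t _ => (hφ' t).hasDerivWithinAt) (fun t _ => sub_nonneg.2 (hκ _ (hline t)))

theorem le_secondDiff_of_le_hessian (hhom : ∀ c : ℝ, 0 < c → ∀ x, f (c • x) = c ^ 2 * f x)
    (hf : ∀ x, x ≠ 0 → HasFDerivAt f (f' x) x) (hf' : ∀ x, x ≠ 0 → HasFDerivAt f' (f'' x) x)
    {q : E → ℝ} (hq0 : q 0 = 0) (hle : ∀ x, x ≠ 0 → ∀ y, q y ≤ f'' x y y) (m u : E) :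
    q u ≤ secondDiff f m u := by
  rcases eq_or_ne u 0 with rfl | hu
  · simp only [secondDiff, hq0, add_zero, sub_zero]
    linarith
  -- A line through the origin lies on the ray of `u`, where `f` is piecewise quadratic; any other
  -- line stays in the region where `f` is twice differentiable.
  by_cases hcol : ∃ s : ℝ, m = s • u
  · obtain ⟨s, rfl⟩ := hcol
    have hself (z : E) (hz : z ≠ 0) := hessian_apply_self_self_of_sq_homogeneous hhom hf hf' hz
    have hu' : q u ≤ 2 * f u := hself u hu ▸ hle u hu u
    have hnegu : q u ≤ 2 * f (-u) := by
      have h := hle (-u) (neg_ne_zero.2 hu) u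
      have hneg : f'' (-u) u u = f'' (-u) (-u) (-u) := by simp
      rwa [hneg, hself (-u) (neg_ne_zero.2 hu)] at h
    have hmid := (convexOn_comp_smul_sub_sq hhom hu' hnegu).le_avg_add_sub s 1
    simp only [add_smul, sub_smul, one_smul] at hmid
    simp only [secondDiff]
    nlinarith [hmid]
  · push Not at hcol
    have hline (t : ℝ) : m + t • u ≠ 0 := fun h =>
      hcol (-t) (by rw [neg_smul, eq_neg_iff_add_eq_zero, h])
    have hmid := (convexOn_comp_line_sub_sq hf hf' hline fun z hz => hle z hz u).le_avg_add_sub 0 1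
    simp only [zero_add, zero_sub, one_smul, neg_smul, zero_smul, add_zero, ← sub_eq_add_neg]
      at hmid
    simp only [secondDiff]
    linarith

theorem le_hessian_of_le_secondDiff (hf : ∀ x, x ≠ 0 → HasFDerivAt f (f' x) x)
    (hf' : ∀ x, x ≠ 0 → HasFDerivAt f' (f'' x) x) {q : E → ℝ}
    (hq : ∀ c : ℝ, 0 < c → ∀ x, q (c • x) = c ^ 2 * q x) (hle : ∀ m u, q u ≤ secondDiff f m u)
    {x : E} (hx : x ≠ 0) (y : E) : q y ≤ f'' x y y := by
  have hnear : ∀ᶠ z in 𝓝 x, HasFDerivAt f (f' z) z := (eventually_ne_nhds hx).mono hf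
  refine ge_of_tendsto (tendsto_secondDiff_div_sq hnear (hf' x hx) y) ?_
  filter_upwards [self_mem_nhdsWithin] with t (ht : 0 < t)
  rw [le_div_iff₀ (by positivity), mul_comm, ← hq t ht]
  exact hle x (t • y)

theorem le_secondDiff_iff_le_hessian (hhom : ∀ c : ℝ, 0 < c → ∀ x, f (c • x) = c ^ 2 * f x)
    (hf : ∀ x, x ≠ 0 → HasFDerivAt f (f' x) x) (hf' : ∀ x, x ≠ 0 → HasFDerivAt f' (f'' x) x)
    {q : E → ℝ} (hq : ∀ c : ℝ, 0 < c → ∀ x, q (c • x) = c ^ 2 * q x) :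
    (∀ m u, q u ≤ secondDiff f m u) ↔ ∀ x, x ≠ 0 → ∀ y, q y ≤ f'' x y y :=
  ⟨fun h _ hx y => le_hessian_of_le_secondDiff hf hf' hq h hx y,
    fun h => le_secondDiff_of_le_hessian hhom hf hf' (map_zero_of_sq_homogeneous hq) h⟩

end Homogeneous

section Norm

variable {N : E → ℝ} {DN : E → E →L[ℝ] ℝ} {g : E → E →L[ℝ] E →L[ℝ] ℝ}

theorem sq_div_two_smul_of_homogeneous (hhom : ∀ c : ℝ, 0 < c → ∀ x, N (c • x) = c * N x)
    (c : ℝ) (hc : 0 < c) (x : E) : N (c • x) ^ 2 / 2 = c ^ 2 * (N x ^ 2 / 2) := by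
  rw [hhom c hc]
  ring

theorem convexity_modulus_iff (hhom : ∀ c : ℝ, 0 < c → ∀ x, N (c • x) = c * N x) (c : ℝ) :
    (∀ x y, N ((2⁻¹ : ℝ) • (x + y)) ^ 2 ≤
      (1 / 2) * N x ^ 2 + (1 / 2) * N y ^ 2 - (1 / (4 * c ^ 2)) * N (x - y) ^ 2) ↔
    ∀ m u, N u ^ 2 / c ^ 2 ≤ secondDiff (fun z => N z ^ 2 / 2) m u := by
  rw [forall_add_sub_iff]
  refine forall₂_congr fun m u => ?_
  have hmid : (2⁻¹ : ℝ) • (m + u + (m - u)) = m := by module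
  have hdiff : m + u - (m - u) = (2 : ℝ) • u := by module
  have hscale : 1 / (4 * c ^ 2) * (2 * N u) ^ 2 = N u ^ 2 / c ^ 2 := by ring
  rw [hmid, hdiff, hhom 2 two_pos, hscale, secondDiff]
  constructor <;> intro h <;> linarith

theorem smoothness_modulus_iff (hhom : ∀ c : ℝ, 0 < c → ∀ x, N (c • x) = c * N x) (s : ℝ) :
    (∀ x y, (1 / 2) * N x ^ 2 + (1 / 2) * N y ^ 2 - (s ^ 2 / 4) * N (x - y) ^ 2 ≤
      N ((2⁻¹ : ℝ) • (x + y)) ^ 2) ↔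
    ∀ m u, secondDiff (fun z => N z ^ 2 / 2) m u ≤ s ^ 2 * N u ^ 2 := by
  rw [forall_add_sub_iff]
  refine forall₂_congr fun m u => ?_
  have hmid : (2⁻¹ : ℝ) • (m + u + (m - u)) = m := by module
  have hdiff : m + u - (m - u) = (2 : ℝ) • u := by module
  rw [hmid, hdiff, hhom 2 two_pos, secondDiff]
  constructor <;> intro h <;> linarith

theorem convexity_constant_eq_sSup (hnonneg : ∀ x, 0 ≤ N x)
    (hhom : ∀ c : ℝ, 0 < c → ∀ x, N (c • x) = c * N x)
    (hD : ∀ x, x ≠ 0 → HasFDerivAt (fun y => N y ^ 2 / 2) (DN x) x)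
    (hg : ∀ x, x ≠ 0 → HasFDerivAt DN (g x) x)
    (hgpos : ∀ x, x ≠ 0 → ∀ y, y ≠ 0 → 0 < g x y y) {C : ℝ}
    (hC : IsLeast {c : ℝ | 0 < c ∧ ∀ x y,
      N ((2⁻¹ : ℝ) • (x + y)) ^ 2 ≤
        (1 / 2) * N x ^ 2 + (1 / 2) * N y ^ 2 - (1 / (4 * c ^ 2)) * N (x - y) ^ 2} C) :
    C = sSup {r : ℝ | ∃ x, x ≠ 0 ∧ ∃ y, y ≠ 0 ∧ r = N y / Real.sqrt (g x y y)} := by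
  refine csSup_eq_of_isLeast_pos (fun c hc => ?_) hC
  have hFhom := sq_div_two_smul_of_homogeneous hhom
  have hq (t : ℝ) (ht : 0 < t) (y : E) : N (t • y) ^ 2 / c ^ 2 = t ^ 2 * (N y ^ 2 / c ^ 2) := by
    rw [hhom t ht]
    ring
  have hN0 : N 0 = 0 := by simpa using map_zero_of_sq_homogeneous (f := fun y => N y ^ 2 / 2) hFhom
  rw [convexity_modulus_iff hhom, le_secondDiff_iff_le_hessian hFhom hD hg hq]
  constructor
  · rintro h _ ⟨x, hx, y, hy, rfl⟩
    exact (div_sqrt_le_iff (hnonneg y) (hgpos x hx y hy) hc).2 (h x hx y)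
  · intro h x hx y
    rcases eq_or_ne y 0 with rfl | hy
    · simp [hN0]
    · exact (div_sqrt_le_iff (hnonneg y) (hgpos x hx y hy) hc).1 (h ⟨x, hx, y, hy, rfl⟩)

theorem smoothness_constant_eq_sSup (hnonneg : ∀ x, 0 ≤ N x)
    (hhom : ∀ c : ℝ, 0 < c → ∀ x, N (c • x) = c * N x)
    (hD : ∀ x, x ≠ 0 → HasFDerivAt (fun y => N y ^ 2 / 2) (DN x) x)
    (hg : ∀ x, x ≠ 0 → HasFDerivAt DN (g x) x)
    (hgpos : ∀ x, x ≠ 0 → ∀ y, y ≠ 0 → 0 < g x y y) {S : ℝ}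
    (hS : IsLeast {s : ℝ | 0 < s ∧ ∀ x y,
      (1 / 2) * N x ^ 2 + (1 / 2) * N y ^ 2 - (s ^ 2 / 4) * N (x - y) ^ 2 ≤
        N ((2⁻¹ : ℝ) • (x + y)) ^ 2} S) :
    S = sSup {r : ℝ | ∃ x, x ≠ 0 ∧ ∃ y, y ≠ 0 ∧ r = Real.sqrt (g x y y) / N y} := by
  refine csSup_eq_of_isLeast_pos (fun s hs => ?_) hS
  have hFhom (t : ℝ) (ht : 0 < t) (x : E) : -(N (t • x) ^ 2 / 2) = t ^ 2 * -(N x ^ 2 / 2) := by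
    rw [sq_div_two_smul_of_homogeneous hhom t ht, mul_neg]
  have hq (t : ℝ) (ht : 0 < t) (y : E) :
      -(s ^ 2 * N (t • y) ^ 2) = t ^ 2 * -(s ^ 2 * N y ^ 2) := by
    rw [hhom t ht]
    ring
  have hNpos (y : E) (hy : y ≠ 0) : 0 < N y := by
    have hself := hessian_apply_self_self_of_sq_homogeneous
      (sq_div_two_smul_of_homogeneous hhom) hD hg hy
    refine (hnonneg y).lt_of_ne fun h0 => ?_
    have := hgpos y hy y hy
    rw [hself, ← h0] at this
    norm_num at this
  have hsecond := le_secondDiff_iff_le_hessian (f := fun z => -(N z ^ 2 / 2))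
    (q := fun y => -(s ^ 2 * N y ^ 2)) hFhom (fun x hx => (hD x hx).neg)
    (fun x hx => (hg x hx).neg) hq
  simp only [secondDiff_neg, neg_apply, neg_le_neg_iff] at hsecond
  rw [smoothness_modulus_iff hhom, hsecond]
  constructor
  · rintro h _ ⟨x, hx, y, hy, rfl⟩
    exact (sqrt_div_le_iff (hNpos y hy) hs).2 (h x hx y)
  · intro h x hx y
    rcases eq_or_ne y 0 with rfl | hy
    · simpa using by positivity
    · exact (sqrt_div_le_iff (hNpos y hy) hs).1 (h ⟨x, hx, y, hy, rfl⟩)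

end Norm

end

/-- For a strongly convex Minkowski norm `N` on ℝⁿ with approximating inner
products `g x` (the Hessian of `N²/2`), the least 2-uniform convexity constant
equals `sup ‖y‖/√(gₓ(y,y))` and the least 2-uniform smoothness constant
equals `sup √(gₓ(y,y))/‖y‖`. -/
theorem stmt_2 {n : ℕ}
    (N : EuclideanSpace ℝ (Fin n) → ℝ)
    (DN : EuclideanSpace ℝ (Fin n) → (EuclideanSpace ℝ (Fin n) →L[ℝ] ℝ))
    (g : EuclideanSpace ℝ (Fin n) →
      (EuclideanSpace ℝ (Fin n) →L[ℝ] EuclideanSpace ℝ (Fin n) →L[ℝ] ℝ))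
    (hnonneg : ∀ x, 0 ≤ N x)
    (hhom : ∀ c : ℝ, 0 < c → ∀ x, N (c • x) = c * N x)
    (hD : ∀ x, x ≠ 0 → HasFDerivAt (fun y => N y ^ 2 / 2) (DN x) x)
    (hg : ∀ x, x ≠ 0 → HasFDerivAt DN (g x) x)
    (hell : ∃ lam Lam : ℝ, 0 < lam ∧ 0 < Lam ∧ ∀ x, x ≠ 0 →
      ∀ v, lam * ‖v‖ ^ 2 ≤ g x v v ∧ g x v v ≤ Lam * ‖v‖ ^ 2)
    (C S : ℝ)
    (hC : IsLeast {c : ℝ | 0 < c ∧ ∀ x y,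
      N ((2⁻¹ : ℝ) • (x + y)) ^ 2 ≤
        (1 / 2) * N x ^ 2 + (1 / 2) * N y ^ 2 - (1 / (4 * c ^ 2)) * N (x - y) ^ 2} C)
    (hS : IsLeast {s : ℝ | 0 < s ∧ ∀ x y,
      (1 / 2) * N x ^ 2 + (1 / 2) * N y ^ 2 - (s ^ 2 / 4) * N (x - y) ^ 2 ≤
        N ((2⁻¹ : ℝ) • (x + y)) ^ 2} S) :
    C = sSup {r : ℝ | ∃ x, x ≠ 0 ∧ ∃ y, y ≠ 0 ∧ r = N y / Real.sqrt (g x y y)} ∧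
    S = sSup {r : ℝ | ∃ x, x ≠ 0 ∧ ∃ y, y ≠ 0 ∧ r = Real.sqrt (g x y y) / N y} := by
  obtain ⟨lam, _, hlam, _, hell⟩ := hell
  have hgpos (x : EuclideanSpace ℝ (Fin n)) (hx : x ≠ 0) (y : EuclideanSpace ℝ (Fin n))
      (hy : y ≠ 0) : 0 < g x y y :=
    (mul_pos hlam (pow_pos (norm_pos_iff.2 hy) 2)).trans_le (hell x hx y).1
  exact ⟨convexity_constant_eq_sSup hnonneg hhom hD hg hgpos hC,
    smoothness_constant_eq_sSup hnonneg hhom hD hg hgpos hS⟩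
end

section
/- In the normed space (ℝ², ‖·‖_∞), the function f(x) = ‖x‖_∞²/2 admits non-unique gradient curves in the metric sense: every curve ξ(t) = (e^{-t}, h(t)) with |h(t)| ≤ e^{-t} and |h'(t)| ≤ e^{-t} for all t ≥ 0 satisfies the energy dissipation identity characterizing metric gradient curves of f, i.e., f(ξ(s)) - f(ξ(t)) = (1/2)∫_s^t |ξ'|(r)² dr + (1/2)∫_s^t |∇f|(ξ(r))² dr for 0 ≤ s ≤ t, where |ξ'|(r) is the metric speed and |∇f| the local slope. -/
/-!
Along `ξ t = (e^{-t}, h t)` the first coordinate dominates, so `‖ξ t‖_∞ = e^{-t}`. Away from the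
origin the slope of `‖·‖²/2` in any normed space equals the norm (the upper bound is the
reverse triangle inequality, the lower one is attained by moving radially towards `0`),
and the metric speed of a differentiable curve is the norm of its velocity, which is
`max (e^{-t}, |h' t|) = e^{-t}`. So both integrands are `e^{-2r}`, whose integral is the
drop of `f` along `ξ`; the second coordinate `h` is free.
-/

open Filter Topology

/-- The local slope of `f` at `x`, `|∇f|(x) = limsup_{y→x} (f x - f y)⁺/‖y-x‖`. -/
noncomputable def localSlope (f : (Fin 2 → ℝ) → ℝ) (x : Fin 2 → ℝ) : ℝ :=
  Filter.limsup (fun y => max (f x - f y) 0 / ‖y - x‖) (nhdsWithin x {x}ᶜ)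

/-- The curve `ξ` has metric speed `s` at time `t`. -/
def HasMetricSpeed (ξ : ℝ → (Fin 2 → ℝ)) (t s : ℝ) : Prop :=
  Filter.Tendsto (fun h : ℝ => ‖ξ (t + h) - ξ t‖ / |h|)
    (nhdsWithin 0 {(0 : ℝ)}ᶜ) (nhds s)

section HalfNormSq

variable {E : Type*} [NormedAddCommGroup E]

lemma half_norm_sq_descent_le (x y : E) :
    max (‖x‖ ^ 2 / 2 - ‖y‖ ^ 2 / 2) 0 / ‖y - x‖ ≤ (‖x‖ + ‖y‖) / 2 := by
  rcases eq_or_ne y x with rfl | hne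
  · simp
  rw [div_le_iff₀ (norm_pos_iff.2 (sub_ne_zero.2 hne))]
  have hrev : ‖x‖ - ‖y‖ ≤ ‖y - x‖ := norm_sub_rev y x ▸ norm_sub_norm_le x y
  refine max_le ?_ (by positivity)
  nlinarith [mul_le_mul_of_nonneg_left hrev (by positivity : (0 : ℝ) ≤ ‖x‖ + ‖y‖)]

variable [NormedSpace ℝ E]

lemma half_norm_sq_descent_one_sub_smul (x : E) {ε : ℝ} (h0 : 0 < ε) (h1 : ε < 1) :
    max (‖x‖ ^ 2 / 2 - ‖(1 - ε) • x‖ ^ 2 / 2) 0 / ‖(1 - ε) • x - x‖ = ‖x‖ * (2 - ε) / 2 := by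
  have hdiff : (1 - ε) • x - x = (-ε) • x := by module
  rw [hdiff, norm_smul, norm_smul, Real.norm_eq_abs, Real.norm_eq_abs, abs_neg,
    abs_of_pos h0, abs_of_pos (sub_pos.2 h1)]
  have hdrop : ‖x‖ ^ 2 / 2 - ((1 - ε) * ‖x‖) ^ 2 / 2 = ε * ‖x‖ * (‖x‖ * (2 - ε) / 2) := by
    ring
  have h2ε : 0 < 2 - ε := by linarith
  rw [hdrop, max_eq_left (by positivity)]
  rcases eq_or_ne x 0 with rfl | hx
  · simp
  exact mul_div_cancel_left₀ _ (mul_pos h0 (norm_pos_iff.2 hx)).ne'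

lemma tendsto_one_sub_smul_nhdsNE {x : E} (hx : x ≠ 0) :
    Tendsto (fun ε : ℝ => (1 - ε) • x) (𝓝[>] 0) (𝓝[≠] x) := by
  refine tendsto_nhdsWithin_iff.2 ⟨?_, ?_⟩
  · have hcont : Continuous fun ε : ℝ => (1 - ε) • x := by fun_prop
    simpa using (hcont.tendsto 0).mono_left nhdsWithin_le_nhds
  · filter_upwards [self_mem_nhdsWithin] with ε (hε : 0 < ε) (hfix : (1 - ε) • x = x)
    have : ε • x = 0 := by rw [show ε • x = x - (1 - ε) • x by module, hfix, sub_self]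
    exact hx ((smul_eq_zero.1 this).resolve_left hε.ne')

lemma limsup_half_norm_sq_descent {x : E} (hx : x ≠ 0) :
    limsup (fun y => max (‖x‖ ^ 2 / 2 - ‖y‖ ^ 2 / 2) 0 / ‖y - x‖) (𝓝[≠] x) = ‖x‖ := by
  set q : E → ℝ := fun y => max (‖x‖ ^ 2 / 2 - ‖y‖ ^ 2 / 2) 0 / ‖y - x‖
  have hradial := tendsto_one_sub_smul_nhdsNE hx
  have : (𝓝[≠] x).NeBot := hradial.neBot
  have hq_nonneg : ∀ y, 0 ≤ q y := fun y => div_nonneg (le_max_right _ _) (norm_nonneg _)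
  have hbound : Tendsto (fun y : E => (‖x‖ + ‖y‖) / 2) (𝓝[≠] x) (𝓝 ‖x‖) := by
    have hcont : Continuous fun y : E => (‖x‖ + ‖y‖) / 2 := by fun_prop
    simpa using (hcont.tendsto x).mono_left nhdsWithin_le_nhds
  have hq_le : limsup q (𝓝[≠] x) ≤ ‖x‖ :=
    hbound.limsup_eq ▸ limsup_le_limsup (Eventually.of_forall (half_norm_sq_descent_le x))
      (isCoboundedUnder_le_of_le _ hq_nonneg) hbound.isBoundedUnder_le
  have hq_radial : Tendsto (q ∘ fun ε : ℝ => (1 - ε) • x) (𝓝[>] 0) (𝓝 ‖x‖) := by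
    have hlin : Tendsto (fun ε : ℝ => ‖x‖ * (2 - ε) / 2) (𝓝[>] 0) (𝓝 ‖x‖) := by
      have hcont : Continuous fun ε : ℝ => ‖x‖ * (2 - ε) / 2 := by fun_prop
      simpa using (hcont.tendsto 0).mono_left nhdsWithin_le_nhds
    refine hlin.congr' ?_
    filter_upwards [Ioo_mem_nhdsGT one_pos] with ε ⟨h0, h1⟩
    exact (half_norm_sq_descent_one_sub_smul x h0 h1).symm
  have hq_ge : ‖x‖ ≤ limsup q (𝓝[≠] x) := by
    rw [← hq_radial.limsup_eq, limsup_comp]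
    exact limsup_le_limsup_of_le hradial
      (isCoboundedUnder_le_of_le _ fun ε => hq_nonneg _)
      (isBoundedUnder_of_eventually_le
        (hbound.eventually_le_const (lt_add_one ‖x‖) |>.mono fun y hy =>
          (half_norm_sq_descent_le x y).trans hy))
  exact le_antisymm hq_le hq_ge

end HalfNormSq

lemma localSlope_half_norm_sq {x : Fin 2 → ℝ} (hx : x ≠ 0) :
    localSlope (fun x => ‖x‖ ^ 2 / 2) x = ‖x‖ :=
  limsup_half_norm_sq_descent hx

lemma HasDerivAt.hasMetricSpeed {ξ : ℝ → Fin 2 → ℝ} {ξ' : Fin 2 → ℝ} {t : ℝ}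
    (hξ : HasDerivAt ξ ξ' t) : HasMetricSpeed ξ t ‖ξ'‖ := by
  refine hξ.tendsto_slope_zero.norm.congr fun δ => ?_
  rw [norm_smul, norm_inv, Real.norm_eq_abs, inv_mul_eq_div]

lemma norm_fin_two_of_abs_le {a b : ℝ} (hab : |b| ≤ |a|) :
    ‖(![a, b] : Fin 2 → ℝ)‖ = |a| := by
  simpa [Pi.norm_def, Fin.univ_succ] using hab

lemma norm_exp_neg_pair {b t : ℝ} (hb : |b| ≤ Real.exp (-t)) :
    ‖(![Real.exp (-t), b] : Fin 2 → ℝ)‖ = Real.exp (-t) := by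
  rw [norm_fin_two_of_abs_le, abs_of_pos (Real.exp_pos _)]
  rwa [abs_of_pos (Real.exp_pos _)]

lemma hasMetricSpeed_exp_neg_pair {h : ℝ → ℝ} {t : ℝ} (hd : DifferentiableAt ℝ h t)
    (hh' : |deriv h t| ≤ Real.exp (-t)) :
    HasMetricSpeed (fun t => ![Real.exp (-t), h t]) t (Real.exp (-t)) := by
  have hξ : HasDerivAt (fun t => ![Real.exp (-t), h t]) ![-Real.exp (-t), deriv h t] t := by
    refine hasDerivAt_pi.2 fun i => ?_
    fin_cases i
    · simpa using (hasDerivAt_neg t).exp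
    · simpa using hd.hasDerivAt
  have hξ' : ‖(![-Real.exp (-t), deriv h t] : Fin 2 → ℝ)‖ = Real.exp (-t) := by
    rw [norm_fin_two_of_abs_le, abs_neg, abs_of_pos (Real.exp_pos _)]
    rwa [abs_neg, abs_of_pos (Real.exp_pos _)]
  exact hξ' ▸ hξ.hasMetricSpeed

lemma integral_exp_neg_sq (s t : ℝ) :
    ∫ r in s..t, Real.exp (-r) ^ 2 = Real.exp (-s) ^ 2 / 2 - Real.exp (-t) ^ 2 / 2 := by
  have hF : ∀ r ∈ Set.uIcc s t,
      HasDerivAt (fun r => -(Real.exp (-r) ^ 2 / 2)) (Real.exp (-r) ^ 2) r := fun r _ => by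
    refine (((hasDerivAt_neg r).exp.fun_pow 2).div_const 2).fun_neg.congr_deriv ?_
    norm_num
    ring
  have hcont : Continuous fun r => Real.exp (-r) ^ 2 := by fun_prop
  rw [intervalIntegral.integral_eq_sub_of_hasDerivAt hF (hcont.intervalIntegrable s t)]
  ring

/-- In `(ℝ², ‖·‖_∞)` (the sup norm on `Fin 2 → ℝ`), every curve
`ξ t = (e^{-t}, h t)` with `|h t| ≤ e^{-t}` and `|h' t| ≤ e^{-t}` satisfies the
energy dissipation identity characterizing metric gradient curves of
`f x = ‖x‖_∞²/2`; hence gradient curves of `f` are non-unique. -/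
theorem stmt_6 (h : ℝ → ℝ)
    (hh : ∀ t, 0 ≤ t → |h t| ≤ Real.exp (-t))
    (hdiff : ∀ t, 0 ≤ t → DifferentiableAt ℝ h t)
    (hh' : ∀ t, 0 ≤ t → |deriv h t| ≤ Real.exp (-t)) :
    ∃ ms : ℝ → ℝ,
      (∀ t, 0 ≤ t → HasMetricSpeed (fun t => ![Real.exp (-t), h t]) t (ms t)) ∧
      ∀ s t : ℝ, 0 ≤ s → s ≤ t →
        ‖(![Real.exp (-s), h s] : Fin 2 → ℝ)‖ ^ 2 / 2 -
          ‖(![Real.exp (-t), h t] : Fin 2 → ℝ)‖ ^ 2 / 2 =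
        (1 / 2) * (∫ r in s..t, (ms r) ^ 2) +
        (1 / 2) * (∫ r in s..t,
          (localSlope (fun x => ‖x‖ ^ 2 / 2) ![Real.exp (-r), h r]) ^ 2) := by
  have hnorm : ∀ r, 0 ≤ r → ‖(![Real.exp (-r), h r] : Fin 2 → ℝ)‖ = Real.exp (-r) :=
    fun r hr => norm_exp_neg_pair (hh r hr)
  refine ⟨fun r => Real.exp (-r),
    fun t ht => hasMetricSpeed_exp_neg_pair (hdiff t ht) (hh' t ht), fun s t hs hst => ?_⟩
  have hslope : ∫ r in s..t, (localSlope (fun x => ‖x‖ ^ 2 / 2) ![Real.exp (-r), h r]) ^ 2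
      = ∫ r in s..t, Real.exp (-r) ^ 2 := by
    refine intervalIntegral.integral_congr fun r hr => ?_
    have hr0 : 0 ≤ r := hs.trans (Set.uIcc_of_le hst ▸ hr).1
    have hne : (![Real.exp (-r), h r] : Fin 2 → ℝ) ≠ 0 := by
      rw [← norm_pos_iff, hnorm r hr0]
      exact Real.exp_pos _
    simp only [localSlope_half_norm_sq hne, hnorm r hr0]
  rw [hslope, integral_exp_neg_sq, hnorm s hs, hnorm t (hs.trans hst)]
  ring
end

section
/- For each ε ∈ (0,1), let ‖·‖_ε be the Minkowski norm on ℝⁿ whose unit sphere is the Euclidean unit sphere centered at ((1−ε), 0, …, 0), i.e., ‖x‖_ε is the unique t > 0 with |x/t − (1−ε)e₁| = 1 where |·| is the Euclidean norm. Then the least constant c(ε) ≥ 1 such that some inner product ⟨·,·⟩ satisfies ‖y‖_ε² ≤ ⟨y,y⟩ ≤ c(ε)‖y‖_ε² for all y tends to infinity as ε → 0. -/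
/-!
The sphere of `N_ε` is the Euclidean unit sphere centred at `(1 - ε) e₁`, so the ray through `e₁`
leaves it at `(2 - ε) e₁` and the ray through `-e₁` at `-ε e₁`: hence `N_ε e₁ = (2 - ε)⁻¹` and
`N_ε (-e₁) = ε⁻¹`. A quadratic form takes the same value at `e₁` and `-e₁`, so sandwiching it
between `N_ε²` and `c N_ε²` forces `c ≥ (N_ε (-e₁) / N_ε e₁)² = ((2 - ε) / ε)²`, which blows up.
-/

open Filter Set

section ShiftedSphere

variable {E : Type*} [NormedAddCommGroup E] [NormedSpace ℝ E] {u : E} {N : E → ℝ} {ε : ℝ}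

lemma eq_inv_two_sub_of_shifted_sphere (hu : ‖u‖ = 1) (hε : ε < 2)
    (hN : ∀ t : ℝ, 0 < t → ‖t⁻¹ • u - (1 - ε) • u‖ = 1 → t = N u) :
    N u = (2 - ε)⁻¹ := by
  refine (hN _ (inv_pos.2 (by linarith)) ?_).symm
  rw [inv_inv, ← sub_smul, show 2 - ε - (1 - ε) = 1 by ring, one_smul, hu]

lemma neg_eq_inv_of_shifted_sphere (hu : ‖u‖ = 1) (hε : 0 < ε)
    (hN : ∀ t : ℝ, 0 < t → ‖t⁻¹ • -u - (1 - ε) • u‖ = 1 → t = N (-u)) :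
    N (-u) = ε⁻¹ := by
  refine (hN _ (inv_pos.2 hε) ?_).symm
  rw [inv_inv, smul_neg, ← neg_smul, ← sub_smul, show -ε - (1 - ε) = -1 by ring, neg_smul,
    one_smul, norm_neg, hu]

end ShiftedSphere

lemma div_sq_le_of_sq_le_bilin_le {E : Type*} [AddCommGroup E] [Module ℝ E]
    (B : E →ₗ[ℝ] E →ₗ[ℝ] ℝ) {N : E → ℝ} {k : ℝ}
    (hB : ∀ y, N y ^ 2 ≤ B y y ∧ B y y ≤ k * N y ^ 2) {x : E} (hx : 0 < N x) :
    (N (-x) / N x) ^ 2 ≤ k := by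
  rw [div_pow, div_le_iff₀ (by positivity)]
  calc N (-x) ^ 2 ≤ B (-x) (-x) := (hB (-x)).1
    _ = B x x := by simp
    _ ≤ k * N x ^ 2 := (hB x).2

lemma inv_le_sq_two_sub_div {ε : ℝ} (hε : ε ∈ Ioo (0 : ℝ) 1) : ε⁻¹ ≤ ((2 - ε) / ε) ^ 2 := by
  obtain ⟨hε0, hε1⟩ := hε
  have hinv : 1 ≤ ε⁻¹ := one_le_inv_iff₀.2 ⟨hε0, hε1.le⟩
  have hratio : (2 - ε) / ε = 2 * ε⁻¹ - 1 := by field_simp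
  rw [hratio]
  nlinarith

theorem stmt_10_general {n : ℕ} (hn : 0 < n)
    (N : ℝ → EuclideanSpace ℝ (Fin n) → ℝ)
    (hN : ∀ ε ∈ Set.Ioo (0 : ℝ) 1, ∀ x : EuclideanSpace ℝ (Fin n), x ≠ 0 →
      0 < N ε x ∧
      ‖(N ε x)⁻¹ • x - (1 - ε) • EuclideanSpace.single (⟨0, hn⟩ : Fin n) (1 : ℝ)‖ = 1 ∧
      ∀ t : ℝ, 0 < t →
        ‖t⁻¹ • x - (1 - ε) • EuclideanSpace.single (⟨0, hn⟩ : Fin n) (1 : ℝ)‖ = 1 →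
        t = N ε x)
    (c : ℝ → ℝ)
    (hc : ∀ ε ∈ Set.Ioo (0 : ℝ) 1, IsLeast {k : ℝ | 1 ≤ k ∧
      ∃ B : EuclideanSpace ℝ (Fin n) →ₗ[ℝ] EuclideanSpace ℝ (Fin n) →ₗ[ℝ] ℝ,
        (∀ x y, B x y = B y x) ∧
        ∀ y, N ε y ^ 2 ≤ B y y ∧ B y y ≤ k * N ε y ^ 2} (c ε)) :
    Filter.Tendsto c (nhdsWithin 0 (Set.Ioo 0 1)) Filter.atTop := by
  set e : EuclideanSpace ℝ (Fin n) := EuclideanSpace.single (⟨0, hn⟩ : Fin n) (1 : ℝ)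
  have he : ‖e‖ = 1 := by simp [e]
  have he0 : e ≠ 0 := norm_ne_zero_iff.1 (by simp [he])
  have hbound : ∀ ε ∈ Ioo (0 : ℝ) 1, ((2 - ε) / ε) ^ 2 ≤ c ε := by
    intro ε hε
    have hNe : N ε e = (2 - ε)⁻¹ :=
      eq_inv_two_sub_of_shifted_sphere he (by linarith [hε.2]) (hN ε hε e he0).2.2
    have hNne : N ε (-e) = ε⁻¹ :=
      neg_eq_inv_of_shifted_sphere he hε.1 (hN ε hε (-e) (neg_ne_zero.2 he0)).2.2
    obtain ⟨⟨-, B, -, hB⟩, -⟩ := hc ε hε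
    have := div_sq_le_of_sq_le_bilin_le B hB (hN ε hε e he0).1
    rwa [hNe, hNne, inv_div_inv] at this
  refine tendsto_atTop_mono' _ ?_
    (tendsto_inv_nhdsGT_zero.mono_left (nhdsWithin_mono 0 Ioo_subset_Ioi_self))
  filter_upwards [self_mem_nhdsWithin] with ε hε
  exact (inv_le_sq_two_sub_div hε).trans (hbound ε hε)

/-- For the family of (nonsymmetric) Minkowski norms `N ε` on ℝⁿ whose unit
sphere is the Euclidean unit sphere centered at `(1-ε)e₁`, the least constant
`c(ε) ≥ 1` such that some inner product `B` satisfies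
`N_ε(y)² ≤ B(y,y) ≤ c(ε) N_ε(y)²` tends to `∞` as `ε → 0⁺`. -/
theorem stmt_10 {n : ℕ} (hn : 0 < n)
    (N : ℝ → EuclideanSpace ℝ (Fin n) → ℝ)
    (hN0 : ∀ ε ∈ Set.Ioo (0 : ℝ) 1, N ε 0 = 0)
    (hN : ∀ ε ∈ Set.Ioo (0 : ℝ) 1, ∀ x : EuclideanSpace ℝ (Fin n), x ≠ 0 →
      0 < N ε x ∧
      ‖(N ε x)⁻¹ • x - (1 - ε) • EuclideanSpace.single (⟨0, hn⟩ : Fin n) (1 : ℝ)‖ = 1 ∧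
      ∀ t : ℝ, 0 < t →
        ‖t⁻¹ • x - (1 - ε) • EuclideanSpace.single (⟨0, hn⟩ : Fin n) (1 : ℝ)‖ = 1 →
        t = N ε x)
    (c : ℝ → ℝ)
    (hc : ∀ ε ∈ Set.Ioo (0 : ℝ) 1, IsLeast {k : ℝ | 1 ≤ k ∧
      ∃ B : EuclideanSpace ℝ (Fin n) →ₗ[ℝ] EuclideanSpace ℝ (Fin n) →ₗ[ℝ] ℝ,
        (∀ x y, B x y = B y x) ∧
        ∀ y, N ε y ^ 2 ≤ B y y ∧ B y y ≤ k * N ε y ^ 2} (c ε)) :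
    Filter.Tendsto c (nhdsWithin 0 (Set.Ioo 0 1)) Filter.atTop :=
  stmt_10_general hn N hN c hc
end

section
/- Let ‖·‖ be a strongly convex Minkowski norm on ℝⁿ with Legendre transform L: ℝⁿ → (ℝⁿ)* (identified with ℝⁿ via the Euclidean inner product ⟨·,·⟩) and inverse L* = L^{−1}. There exists such a norm on ℝ² and a vector v ≠ 0 with ⟨L(v), L*(v)⟩ < 0. Consequently, for the Euclidean quadratic function f̃(x) = ⟨x,x⟩/2 (which is convex along straight lines), the skew-convexity expression g_v(v, ∇(−f̃)(0)) − g_v(v, ∇(−f̃)(−v)) = −⟨L(v), L*(v)⟩ is strictly positive, so f̃ is not 0-skew convex on (ℝ², ‖·‖). -/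
/-!
The Randers norm `N x = ‖x‖ - ⟪a, x⟫` with `‖a‖ < 1` is a strictly convex Minkowski norm whose
Legendre transform is `L x = N x • (x / ‖x‖ - a)`, i.e. `N x` times the gradient of `N`.
Bijectivity of `L`: injectivity follows from `⟪L x, y⟫ ≤ N x * N y` together with its equality
case (Cauchy–Schwarz), and a preimage of `w` is found on the ray through the unit vector
`(w + t • a) / t`, where `t > 0` solves `‖w + t • a‖ = t`.

In the plane, take `a = (4/5, 0)` and `v = (0, 1)`. Then `L v = v - a`, whereas
`L* v = (100/27, 25/9)` is tilted so far towards `a` that `⟪L v, L* v⟫ = -5/27`.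
-/

open scoped RealInnerProductSpace

noncomputable section

section Randers

variable {E : Type*} [NormedAddCommGroup E] [InnerProductSpace ℝ E]

def randersNorm (a x : E) : ℝ := ‖x‖ - ⟪a, x⟫

def randersLegendre (a x : E) : E := (randersNorm a x / ‖x‖) • x - randersNorm a x • a

variable {a : E}

theorem randersNorm_pos (ha : ‖a‖ < 1) {x : E} (hx : x ≠ 0) : 0 < randersNorm a x := by
  have hx' : 0 < ‖x‖ := norm_pos_iff.2 hx
  have := real_inner_le_norm a x
  have := mul_lt_mul_of_pos_right ha hx'
  unfold randersNorm
  linarith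

theorem randersNorm_nonneg (ha : ‖a‖ ≤ 1) (x : E) : 0 ≤ randersNorm a x := by
  have := real_inner_le_norm a x
  have := mul_le_mul_of_nonneg_right ha (norm_nonneg x)
  unfold randersNorm
  linarith

theorem randersNorm_eq_zero_iff (ha : ‖a‖ < 1) {x : E} : randersNorm a x = 0 ↔ x = 0 :=
  ⟨fun h => by_contra fun hx => (randersNorm_pos ha hx).ne' h, fun h => by simp [h, randersNorm]⟩

theorem randersNorm_smul_of_pos {c : ℝ} (hc : 0 < c) (x : E) :
    randersNorm a (c • x) = c * randersNorm a x := by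
  simp only [randersNorm, norm_smul, Real.norm_of_nonneg hc.le, real_inner_smul_right]
  ring

theorem randersNorm_add_le (x y : E) :
    randersNorm a (x + y) ≤ randersNorm a x + randersNorm a y := by
  have := norm_add_le x y
  simp only [randersNorm, inner_add_right]
  linarith

theorem randersNorm_add_lt_of_not_sameRay {x y : E} (h : ¬SameRay ℝ x y) :
    randersNorm a (x + y) < randersNorm a x + randersNorm a y := by
  have := norm_add_lt_of_not_sameRay h
  simp only [randersNorm, inner_add_right]
  linarith

theorem inner_randersLegendre (x y : E) :
    ⟪randersLegendre a x, y⟫ = randersNorm a x * (⟪x, y⟫ / ‖x‖ - ⟪a, y⟫) := by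
  simp only [randersLegendre, inner_sub_left, real_inner_smul_left]
  ring

theorem inner_randersLegendre_self (x : E) : ⟪randersLegendre a x, x⟫ = randersNorm a x ^ 2 := by
  rw [inner_randersLegendre, real_inner_self_eq_norm_sq, sq, mul_self_div_self, sq]
  rfl

theorem inner_randersLegendre_le (ha : ‖a‖ ≤ 1) (x y : E) :
    ⟪randersLegendre a x, y⟫ ≤ randersNorm a x * randersNorm a y := by
  rw [inner_randersLegendre]
  have : ⟪x, y⟫ / ‖x‖ ≤ ‖y‖ :=
    div_le_of_le_mul₀ (norm_nonneg x) (norm_nonneg y) (by linarith [real_inner_le_norm x y])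
  exact mul_le_mul_of_nonneg_left (by unfold randersNorm; linarith) (randersNorm_nonneg ha x)

theorem inner_eq_norm_mul_of_inner_randersLegendre_eq (ha : ‖a‖ < 1) {x y : E} (hx : x ≠ 0)
    (h : ⟪randersLegendre a x, y⟫ = randersNorm a x * randersNorm a y) :
    ⟪x, y⟫ = ‖x‖ * ‖y‖ := by
  rw [inner_randersLegendre] at h
  have h' := mul_left_cancel₀ (randersNorm_pos ha hx).ne' h
  unfold randersNorm at h'
  rw [sub_left_inj, div_eq_iff (norm_ne_zero_iff.2 hx)] at h'
  rw [h', mul_comm]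

theorem randersLegendre_injective (ha : ‖a‖ < 1) : Function.Injective (randersLegendre a) := by
  intro x y hxy
  have hN : randersNorm a x = randersNorm a y := by
    have hx := inner_randersLegendre_le ha.le y x
    have hy := inner_randersLegendre_le ha.le x y
    rw [← hxy, inner_randersLegendre_self] at hx
    rw [hxy, inner_randersLegendre_self] at hy
    nlinarith
  rcases eq_or_ne x 0 with rfl | hx0
  · rw [eq_comm, ← randersNorm_eq_zero_iff ha, ← hN, randersNorm_eq_zero_iff ha]
  have hy0 : y ≠ 0 := fun hy0 =>
    hx0 <| (randersNorm_eq_zero_iff ha).1 <| hN.trans <| (randersNorm_eq_zero_iff ha).2 hy0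
  have hxy_ray : ‖y‖ • x = ‖x‖ • y := by
    refine inner_eq_norm_mul_iff_real.1 (inner_eq_norm_mul_of_inner_randersLegendre_eq ha hx0 ?_)
    rw [hxy, inner_randersLegendre_self, ← hN, sq]
  have hnorm : ‖y‖ = ‖x‖ := by
    have := congrArg (randersNorm a) hxy_ray
    rw [randersNorm_smul_of_pos (norm_pos_iff.2 hy0), randersNorm_smul_of_pos (norm_pos_iff.2 hx0),
      ← hN] at this
    exact mul_right_cancel₀ (randersNorm_pos ha hx0).ne' this
  rw [hnorm] at hxy_ray
  exact smul_right_injective E (norm_ne_zero_iff.2 hx0) hxy_ray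

theorem randersLegendre_smul_of_pos {r : ℝ} (hr : 0 < r) (x : E) :
    randersLegendre a (r • x) = r • randersLegendre a x := by
  simp only [randersLegendre, randersNorm_smul_of_pos hr, norm_smul, Real.norm_of_nonneg hr.le,
    smul_sub, smul_smul, mul_div_mul_left _ _ hr.ne']
  ring_nf

theorem randersLegendre_of_norm_eq_one {u : E} (hu : ‖u‖ = 1) :
    randersLegendre a u = randersNorm a u • (u - a) := by
  simp [randersLegendre, hu, smul_sub]

theorem exists_norm_add_smul_eq (ha : ‖a‖ < 1) {w : E} (hw : w ≠ 0) :
    ∃ t : ℝ, 0 < t ∧ ‖w + t • a‖ = t := by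
  set f : ℝ → ℝ := fun t => ‖w + t • a‖ - t
  set T := ‖w‖ / (1 - ‖a‖) + 1
  have hT : f T < 0 := by
    have h1 : ‖w + T • a‖ ≤ ‖w‖ + T * ‖a‖ := by
      simpa [norm_smul, abs_of_pos (by positivity : 0 < T)] using norm_add_le w (T • a)
    have h2 : ‖w‖ / (1 - ‖a‖) * (1 - ‖a‖) = ‖w‖ := div_mul_cancel₀ _ (by linarith)
    simp only [f]
    nlinarith [norm_nonneg a]
  have h0 : f 0 = ‖w‖ := by simp [f]
  obtain ⟨t, ⟨ht0, -⟩, ht⟩ : (0 : ℝ) ∈ f '' Set.Icc 0 T :=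
    intermediate_value_Icc' (by positivity) (by fun_prop) ⟨hT.le, h0 ▸ norm_nonneg w⟩
  refine ⟨t, ht0.lt_of_ne ?_, sub_eq_zero.1 ht⟩
  rintro rfl
  exact norm_ne_zero_iff.2 hw (h0 ▸ ht)

theorem randersLegendre_surjective (ha : ‖a‖ < 1) : Function.Surjective (randersLegendre a) := by
  intro w
  rcases eq_or_ne w 0 with rfl | hw
  · exact ⟨0, by simp [randersLegendre, randersNorm]⟩
  obtain ⟨t, ht, hwt⟩ := exists_norm_add_smul_eq ha hw
  set u := t⁻¹ • (w + t • a)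
  have hu : ‖u‖ = 1 := by
    rw [norm_smul, hwt, norm_inv, Real.norm_of_nonneg ht.le, inv_mul_cancel₀ ht.ne']
  have hNu := randersNorm_pos ha (norm_ne_zero_iff.1 (hu ▸ one_ne_zero))
  refine ⟨(t / randersNorm a u) • u, ?_⟩
  rw [randersLegendre_smul_of_pos (div_pos ht hNu), randersLegendre_of_norm_eq_one hu, smul_smul,
    div_mul_cancel₀ _ hNu.ne', smul_sub, smul_smul, mul_inv_cancel₀ ht.ne', one_smul,
    add_sub_cancel_right]

theorem randersLegendre_bijective (ha : ‖a‖ < 1) : Function.Bijective (randersLegendre a) :=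
  ⟨randersLegendre_injective ha, randersLegendre_surjective ha⟩

end Randers

theorem SameRay.exists_eq_smul_or_eq_smul {M : Type*} [AddCommGroup M] [Module ℝ M] {x y : M}
    (h : SameRay ℝ x y) : ∃ t : ℝ, y = t • x ∨ x = t • y := by
  rcases eq_or_ne x 0 with rfl | hx
  · exact ⟨0, Or.inr (zero_smul ℝ y).symm⟩
  · obtain ⟨r, -, hr⟩ := h.exists_nonneg_left hx
    exact ⟨r, Or.inl hr.symm⟩

section PlanarExample

local notation "ℝ²" => EuclideanSpace ℝ (Fin 2)

theorem norm_vec2 (x y : ℝ) : ‖(!₂[x, y] : ℝ²)‖ = √(x ^ 2 + y ^ 2) := by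
  simp [EuclideanSpace.norm_eq, Fin.sum_univ_two]

theorem inner_vec2 (x y z w : ℝ) : ⟪(!₂[x, y] : ℝ²), !₂[z, w]⟫ = x * z + y * w := by
  simp [Fin.sum_univ_two, PiLp.inner_apply]
  ring

def tilt : ℝ² := !₂[4/5, 0]

theorem norm_tilt_lt_one : ‖tilt‖ < 1 := by
  rw [tilt, norm_vec2, Real.sqrt_lt' one_pos]
  norm_num

theorem randersLegendre_tilt_e2 : randersLegendre tilt !₂[0, 1] = !₂[-4/5, 1] := by
  have hnorm : ‖(!₂[0, 1] : ℝ²)‖ = 1 := by simp [norm_vec2]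
  rw [randersLegendre_of_norm_eq_one hnorm, randersNorm, hnorm, tilt, inner_vec2]
  ext i
  fin_cases i <;> norm_num

theorem randersLegendre_tilt_preimage_e2 :
    randersLegendre tilt !₂[100/27, 25/9] = !₂[0, 1] := by
  have hnorm : ‖(!₂[100/27, 25/9] : ℝ²)‖ = 125/27 := by
    rw [norm_vec2, Real.sqrt_eq_iff_mul_self_eq_of_pos (by norm_num)]
    norm_num
  rw [randersLegendre, randersNorm, hnorm, tilt, inner_vec2]
  ext i
  fin_cases i <;> norm_num

end PlanarExample

end

/-- There exists a (strictly convex) Minkowski norm `N` on ℝ², with Legendre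
transform `L` (identified with a map ℝ² → ℝ² via the Euclidean inner product)
and inverse `L* = L⁻¹`, and a vector `v ≠ 0` with `⟪L v, L* v⟫ < 0`.
Consequently the skew-convexity expression
`g_v(v, ∇(-f̃)(0)) - g_v(v, ∇(-f̃)(-v)) = -⟪L v, L* v⟫` for the Euclidean
quadratic `f̃(x) = ⟪x,x⟫/2` is strictly positive, so `f̃` is not `0`-skew
convex on `(ℝ², N)`. -/
theorem stmt_14 :
    ∃ (N : EuclideanSpace ℝ (Fin 2) → ℝ)
      (L Lstar : EuclideanSpace ℝ (Fin 2) → EuclideanSpace ℝ (Fin 2)),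
      (∀ x, 0 ≤ N x) ∧
      (∀ x, x ≠ 0 → 0 < N x) ∧
      (∀ c : ℝ, 0 < c → ∀ x, N (c • x) = c * N x) ∧
      (∀ x y, N (x + y) ≤ N x + N y) ∧
      (∀ x y : EuclideanSpace ℝ (Fin 2),
        ¬(∃ t : ℝ, y = t • x ∨ x = t • y) → N (x + y) < N x + N y) ∧
      (∀ x, (inner ℝ (L x) x : ℝ) = N x ^ 2) ∧
      (∀ x y, (inner ℝ (L x) y : ℝ) ≤ N x * N y) ∧
      (∀ x, Lstar (L x) = x) ∧ (∀ x, L (Lstar x) = x) ∧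
      ∃ v : EuclideanSpace ℝ (Fin 2), v ≠ 0 ∧
        (inner ℝ (L v) (Lstar v) : ℝ) < 0 ∧
        0 < -(inner ℝ (L v) (Lstar v) : ℝ) := by
  have ha := norm_tilt_lt_one
  set L := Equiv.ofBijective _ (randersLegendre_bijective ha)
  have hLstar : L.symm !₂[0, 1] = !₂[100/27, 25/9] :=
    L.symm_apply_eq.2 randersLegendre_tilt_preimage_e2.symm
  have hneg : ⟪L !₂[0, 1], L.symm !₂[0, 1]⟫ < 0 := by
    rw [hLstar, Equiv.ofBijective_apply, randersLegendre_tilt_e2, inner_vec2]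
    norm_num
  refine ⟨randersNorm tilt, L, L.symm, randersNorm_nonneg ha.le, fun _ => randersNorm_pos ha,
    fun c => randersNorm_smul_of_pos, randersNorm_add_le,
    fun x y h => randersNorm_add_lt_of_not_sameRay fun hxy => h hxy.exists_eq_smul_or_eq_smul,
    inner_randersLegendre_self, inner_randersLegendre_le ha.le, L.symm_apply_apply,
    L.apply_symm_apply, !₂[0, 1], ?_, hneg, neg_pos.2 hneg⟩
  intro h
  simpa using congrArg (· 1) h
end
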